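/- arXiv:1805.00726 — 4 statements merged into one kernel-verified Lean document; each statement's English description precedes it below -/
import Mathlib

section
/- Let R ≥ 1, δ ∈ ℕ, and k ∈ Fin R. The number of permutations σ of Fin R with inversion number exactly δ and with σ⁻¹(0) = k (i.e., the smallest value 0 occupies the (k+1)-th position, so exactly k larger values precede it) equals N(R−1, δ−k) if k ≤ δ, and equals 0 if k > δ. -/
/-- The inversion number of a permutation `σ` of `Fin n`: the number of pairs
`(i, j)` with `i < j` and `σ i > σ j`. -/
def invNum (n : ℕ) (σ : Equiv.Perm (Fin n)) : ℕ :=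
  (Finset.univ.filter (fun p : Fin n × Fin n => p.1 < p.2 ∧ σ p.2 < σ p.1)).card

/-- `Nperm r d` is the number of permutations of `Fin r` with inversion number exactly `d`. -/
def Nperm (r d : ℕ) : ℕ :=
  (Finset.univ.filter (fun σ : Equiv.Perm (Fin r) => invNum r σ = d)).card

/-- Insert the value `0` at position `k`. -/
def insPerm {m : ℕ} (k : Fin (m + 1)) (τ : Equiv.Perm (Fin m)) : Equiv.Perm (Fin (m + 1)) :=
  (finSuccEquiv' k).trans ((τ.optionCongr).trans (finSuccEquiv' 0).symm)

lemma insPerm_apply_k {m : ℕ} (k : Fin (m + 1)) (τ : Equiv.Perm (Fin m)) :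
    insPerm k τ k = 0 := by
  simp [insPerm]

lemma insPerm_apply_succAbove {m : ℕ} (k : Fin (m + 1)) (τ : Equiv.Perm (Fin m)) (j : Fin m) :
    insPerm k τ (k.succAbove j) = (τ j).succ := by
  simp [insPerm]

lemma card_lt_eq {m : ℕ} (σ : Equiv.Perm (Fin (m + 1))) (k : Fin (m + 1)) (hk : σ k = 0) :
    ((Finset.univ.filter (fun p : Fin (m+1) × Fin (m+1) => p.1 < p.2 ∧ σ p.2 < σ p.1)).filter
      (fun p => p.2 = k)).card = (k : ℕ) := by
  have : ((Finset.univ.filter (fun p : Fin (m+1) × Fin (m+1) => p.1 < p.2 ∧ σ p.2 < σ p.1)).filter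
      (fun p => p.2 = k)) = (Finset.Iio k).image (fun i => (i, k)) := by
    ext p
    simp only [Finset.mem_filter, Finset.mem_univ, true_and, Finset.mem_image, Finset.mem_Iio]
    constructor
    · rintro ⟨⟨h1, _⟩, h2⟩
      exact ⟨p.1, h2 ▸ h1, Prod.ext rfl h2.symm⟩
    · rintro ⟨i, hi, rfl⟩
      refine ⟨⟨hi, ?_⟩, rfl⟩
      rw [hk]
      have : σ i ≠ 0 := by
        rw [← hk]
        exact fun h => absurd (σ.injective h) (ne_of_lt hi)
      exact Fin.pos_iff_ne_zero.mpr this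
  rw [this, Finset.card_image_of_injective _ (fun a b h => by simpa using h), Fin.card_Iio]

lemma invNum_insPerm {m : ℕ} (k : Fin (m + 1)) (τ : Equiv.Perm (Fin m)) :
    invNum (m + 1) (insPerm k τ) = (k : ℕ) + invNum m τ := by
  classical
  set σ := insPerm k τ with hσ
  have hk : σ k = 0 := insPerm_apply_k k τ
  have hs : ∀ j, σ (k.succAbove j) = (τ j).succ := insPerm_apply_succAbove k τ
  unfold invNum
  rw [← Finset.card_filter_add_card_filter_not
    (s := Finset.univ.filter (fun p : Fin (m+1) × Fin (m+1) => p.1 < p.2 ∧ σ p.2 < σ p.1))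
    (p := fun p => p.2 = k)]
  have h1 : ((Finset.univ.filter
      (fun p : Fin (m+1) × Fin (m+1) => p.1 < p.2 ∧ σ p.2 < σ p.1)).filter
      (fun p => p.2 = k)).card = (k : ℕ) := card_lt_eq σ k hk
  have h2 : ((Finset.univ.filter
      (fun p : Fin (m+1) × Fin (m+1) => p.1 < p.2 ∧ σ p.2 < σ p.1)).filter
      (fun p => ¬ p.2 = k)).card =
      (Finset.univ.filter (fun q : Fin m × Fin m => q.1 < q.2 ∧ τ q.2 < τ q.1)).card := by
    rw [eq_comm]
    apply Finset.card_bij (fun q _ => (k.succAbove q.1, k.succAbove q.2))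
    · rintro ⟨a, b⟩ hq
      simp only [Finset.mem_filter, Finset.mem_univ, true_and] at hq ⊢
      refine ⟨⟨Fin.succAbove_lt_succAbove_iff.mpr hq.1, ?_⟩, Fin.succAbove_ne k b⟩
      rw [hs, hs]
      exact Fin.succ_lt_succ_iff.mpr hq.2
    · rintro ⟨a, b⟩ _ ⟨c, d⟩ _ h
      simp only [Prod.mk.injEq] at h
      have e1 := Fin.succAbove_right_injective (p := k) h.1
      have e2 := Fin.succAbove_right_injective (p := k) h.2
      simp [Prod.ext_iff, e1, e2]
    · rintro ⟨a, b⟩ hp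
      simp only [Finset.mem_filter, Finset.mem_univ, true_and] at hp
      obtain ⟨⟨hlt, hval⟩, hbk⟩ := hp
      have hak : a ≠ k := by
        rintro rfl
        rw [hk] at hval
        exact absurd hval (Fin.not_lt_zero _)
      obtain ⟨a', ha'⟩ := Fin.exists_succAbove_eq hak
      obtain ⟨b', hb'⟩ := Fin.exists_succAbove_eq hbk
      refine ⟨(a', b'), ?_, by simp [ha', hb']⟩
      simp only [Finset.mem_filter, Finset.mem_univ, true_and]
      constructor
      · rw [← Fin.succAbove_lt_succAbove_iff (p := k), ha', hb']; exact hlt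
      · rw [← Fin.succ_lt_succ_iff, ← hs, ← hs, ha', hb']; exact hval
  rw [h1, h2]

lemma exists_insPerm {m : ℕ} (k : Fin (m + 1)) (σ : Equiv.Perm (Fin (m + 1))) (hk : σ k = 0) :
    ∃ τ : Equiv.Perm (Fin m), insPerm k τ = σ := by
  set g : Option (Fin m) ≃ Option (Fin m) :=
    ((finSuccEquiv' k).symm.trans (σ.trans (finSuccEquiv' 0))) with hg
  have hgnone : g none = none := by
    simp [hg, finSuccEquiv'_symm_none, hk, finSuccEquiv'_at]
  refine ⟨g.removeNone, Equiv.ext fun i => ?_⟩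
  rcases eq_or_ne i k with rfl | hik
  · rw [insPerm_apply_k, hk]
  · obtain ⟨j, rfl⟩ := Fin.exists_succAbove_eq hik
    rw [insPerm_apply_succAbove]
    have hsome : ∃ y, g (some j) = some y := by
      rcases h : g (some j) with _ | y
      · exfalso
        have := g.injective (h.trans hgnone.symm)
        simp at this
      · exact ⟨y, rfl⟩
    have := Equiv.removeNone_some g hsome
    have hgj : g (some j) = finSuccEquiv' 0 (σ (k.succAbove j)) := by
      simp [hg, finSuccEquiv'_symm_some]
    rw [hgj] at this
    have hne : σ (k.succAbove j) ≠ 0 := by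
      rw [← hk]; exact fun h => (Fin.succAbove_ne k j) (σ.injective h)
    obtain ⟨z, hz⟩ := Fin.exists_succAbove_eq hne
    rw [← hz, finSuccEquiv'_succAbove] at this
    rw [Option.some_inj.mp this, ← hz, Fin.zero_succAbove]

/-- For `R ≥ 1`, `δ ∈ ℕ` and `k : Fin R`, the number of permutations `σ` of `Fin R` with
inversion number exactly `δ` and `σ⁻¹ 0 = k` equals `N(R−1, δ−k)` if `k ≤ δ`, and `0`
if `k > δ`. -/
theorem stmt1 (R δ : ℕ) (hR : 1 ≤ R) (k : Fin R) :
    (Finset.univ.filter (fun σ : Equiv.Perm (Fin R) =>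
        invNum R σ = δ ∧ σ⁻¹ ⟨0, hR⟩ = k)).card =
      if (k : ℕ) ≤ δ then Nperm (R - 1) (δ - (k : ℕ)) else 0 := by
  classical
  obtain ⟨m, rfl⟩ : ∃ m, R = m + 1 := ⟨R - 1, (Nat.succ_pred_eq_of_pos hR).symm⟩
  have hzero : (⟨0, hR⟩ : Fin (m + 1)) = 0 := rfl
  have hmem : ∀ σ : Equiv.Perm (Fin (m+1)), (σ⁻¹ ⟨0, hR⟩ = k ↔ σ k = 0) := by
    intro σ
    rw [hzero, Equiv.Perm.inv_eq_iff_eq, eq_comm]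
  by_cases hkδ : (k : ℕ) ≤ δ
  · rw [if_pos hkδ]
    have hR1 : m + 1 - 1 = m := rfl
    rw [hR1]
    unfold Nperm
    rw [eq_comm]
    apply Finset.card_bij (fun τ _ => insPerm k τ)
    · intro τ hτ
      simp only [Finset.mem_filter, Finset.mem_univ, true_and] at hτ ⊢
      refine ⟨?_, (hmem _).mpr (insPerm_apply_k k τ)⟩
      rw [invNum_insPerm, hτ, Nat.add_sub_cancel' hkδ]
    · intro τ₁ _ τ₂ _ h
      refine Equiv.ext fun j => ?_
      have := congrArg (fun σ : Equiv.Perm (Fin (m+1)) => σ (k.succAbove j)) h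
      simp only [insPerm_apply_succAbove] at this
      exact Fin.succ_injective _ this
    · intro σ hσ
      simp only [Finset.mem_filter, Finset.mem_univ, true_and] at hσ
      obtain ⟨hinv, hkσ⟩ := hσ
      obtain ⟨τ, rfl⟩ := exists_insPerm k σ ((hmem σ).mp hkσ)
      refine ⟨τ, ?_, rfl⟩
      simp only [Finset.mem_filter, Finset.mem_univ, true_and]
      rw [invNum_insPerm] at hinv
      omega
  · rw [if_neg hkδ]
    rw [Finset.card_eq_zero]
    rw [Finset.filter_eq_empty_iff]
    rintro σ -
    rintro ⟨hinv, hkσ⟩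
    obtain ⟨τ, rfl⟩ := exists_insPerm k σ ((hmem σ).mp hkσ)
    rw [invNum_insPerm] at hinv
    omega
end

section
/- (Proposition 1.) Let R ≥ 1, let 0 ≤ δ ≤ R(R−1)/2 (so that the set of permutations of Fin R with inversion number exactly δ is nonempty), and let 1 ≤ M ≤ R. If σ is drawn uniformly at random from the set of permutations of Fin R with inversion number exactly δ, then the probability that σ⁻¹(0) < M (i.e., the top-ranked item appears among the first M positions of σ) equals ∑_{m=1}^{M} N(R−1, δ−m+1) / N(R,δ); equivalently, the number of permutations of Fin R with inversion number exactly δ satisfying σ⁻¹(0) < M equals ∑_{m=1}^{M} N(R−1, δ−m+1). -/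
open Finset Equiv

def insertZeroAt {n : ℕ} (k : Fin (n + 1)) (τ : Perm (Fin n)) : Perm (Fin (n + 1)) :=
  (finSuccEquiv' k).trans (τ.optionCongr.trans (finSuccEquiv n).symm)

section insertZeroAt

variable {n : ℕ} (k : Fin (n + 1)) (τ : Perm (Fin n))

@[simp]
lemma insertZeroAt_apply_self : insertZeroAt k τ k = 0 := by
  simp [insertZeroAt]

@[simp]
lemma insertZeroAt_apply_succAbove (i : Fin n) :
    insertZeroAt k τ (k.succAbove i) = (τ i).succ := by
  simp [insertZeroAt]

lemma insertZeroAt_injective : Function.Injective (insertZeroAt (n := n) k) := by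
  intro τ τ' h
  refine Equiv.ext fun i => ?_
  simpa using congr($h (k.succAbove i))

lemma exists_insertZeroAt_eq {σ : Perm (Fin (n + 1))} (hσ : σ k = 0) :
    ∃ τ, insertZeroAt k τ = σ := by
  set e : Perm (Option (Fin n)) := (finSuccEquiv' k).symm.trans (σ.trans (finSuccEquiv n))
  have he : e none = none := by simp [e, hσ]
  have hτ : (removeNone e).optionCongr = e := by
    simpa only [Perm.decomposeOption, coe_fn_mk, coe_fn_symm_mk, he, swap_self, ← Perm.one_def,
      one_mul] using Perm.decomposeOption.symm_apply_apply e
  refine ⟨removeNone e, Equiv.ext fun i => ?_⟩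
  simp [insertZeroAt, hτ, e]

lemma invNum_eq_sum (σ : Perm (Fin n)) :
    invNum n σ = ∑ i, ∑ j, if i < j ∧ σ j < σ i then 1 else 0 := by
  rw [invNum, card_filter, ← univ_product_univ, sum_product]

lemma card_filter_castSucc_lt (k : Fin (n + 1)) : #{i : Fin n | i.castSucc < k} = k := by
  simp only [Fin.lt_def, Fin.val_castSucc, Fin.card_filter_val_lt]
  exact min_eq_right (Nat.lt_succ_iff.mp k.isLt)

lemma invNum_insertZeroAt : invNum (n + 1) (insertZeroAt k τ) = invNum n τ + k := by
  simp only [invNum_eq_sum, Fin.sum_univ_succAbove _ k, insertZeroAt_apply_self,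
    insertZeroAt_apply_succAbove, Fin.succAbove_lt_succAbove_iff, Fin.succ_lt_succ_iff,
    Fin.not_lt_zero, Fin.succ_pos, and_false, and_true, if_false, sum_add_distrib,
    Fin.succAbove_lt_iff_castSucc_lt, sum_boole, card_filter_castSucc_lt, filter_false, card_empty,
    Nat.cast_id]
  omega

end insertZeroAt

lemma card_invNum_eq_apply_eq_zero {n : ℕ} (d : ℕ) (k : Fin (n + 1)) :
    #{σ : Perm (Fin (n + 1)) | invNum (n + 1) σ = d ∧ σ k = 0} =
      if k ≤ d then Nperm n (d - k) else 0 := by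
  have himage : ({σ : Perm (Fin (n + 1)) | invNum (n + 1) σ = d ∧ σ k = 0} : Finset _) =
      ({τ : Perm (Fin n) | invNum n τ + k = d} : Finset _).map
        ⟨insertZeroAt k, insertZeroAt_injective k⟩ := by
    ext σ
    simp only [mem_filter, mem_univ, true_and, mem_map, Function.Embedding.coeFn_mk]
    constructor
    · rintro ⟨rfl, hσ⟩
      obtain ⟨τ, rfl⟩ := exists_insertZeroAt_eq k hσ
      exact ⟨τ, (invNum_insertZeroAt k τ).symm, rfl⟩
    · rintro ⟨τ, rfl, rfl⟩
      exact ⟨invNum_insertZeroAt k τ, insertZeroAt_apply_self k τ⟩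
  rw [himage, card_map, Nperm]
  split_ifs with hk
  · congr 1; ext τ; simp only [mem_filter, mem_univ, true_and]; omega
  · exact card_eq_zero.mpr (filter_false_of_mem fun τ _ => by omega)

lemma sum_filter_val_lt_eq_sum_range {β : Type*} [AddCommMonoid β] {n M : ℕ} (hM : M ≤ n)
    (g : ℕ → β) :
    ∑ k ∈ {k : Fin n | k < M}, g k = ∑ j ∈ range M, g j := by
  rw [← sum_image fun a _ b _ h => Fin.val_injective h]
  congr 1
  ext j
  simp only [mem_image, mem_filter, mem_univ, true_and, mem_range]
  exact ⟨fun ⟨k, hk, hkj⟩ => hkj ▸ hk, fun hj => ⟨⟨j, by omega⟩, hj, rfl⟩⟩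

lemma card_invNum_eq_inv_zero_lt {n : ℕ} (d : ℕ) {M : ℕ} (hM : M ≤ n + 1) :
    #{σ : Perm (Fin (n + 1)) | invNum (n + 1) σ = d ∧ (σ⁻¹ 0 : ℕ) < M} =
      ∑ j ∈ range M, if j ≤ d then Nperm n (d - j) else 0 := by
  rw [card_eq_sum_card_fiberwise (f := fun σ => σ⁻¹ 0) (t := {k : Fin (n + 1) | k < M})
    (fun σ hσ => by simp_all), ← sum_filter_val_lt_eq_sum_range hM]
  refine sum_congr rfl fun k hk => ?_
  rw [← card_invNum_eq_apply_eq_zero, filter_filter]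
  congr 1
  ext σ
  simp only [mem_filter, mem_univ, true_and] at hk ⊢
  have hinv : σ⁻¹ 0 = k ↔ σ k = 0 := Perm.inv_eq_iff_eq.trans eq_comm
  rw [hinv]
  constructor
  · rintro ⟨⟨hσ, -⟩, h0⟩
    exact ⟨hσ, h0⟩
  · rintro ⟨hσ, h0⟩
    exact ⟨⟨hσ, hinv.mpr h0 ▸ hk⟩, h0⟩

lemma sum_Icc_one_eq_sum_range_succ {β : Type*} [AddCommMonoid β] (f : ℕ → β) (M : ℕ) :
    ∑ m ∈ Icc 1 M, f m = ∑ j ∈ range M, f (j + 1) := by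
  rw [range_eq_Ico, sum_Ico_add', ← Finset.Ico_add_one_right_eq_Icc]

theorem stmt2_general (R δ M : ℕ) (hR : 1 ≤ R) (hMR : M ≤ R) :
    ((Finset.univ.filter (fun σ : Equiv.Perm (Fin R) =>
        invNum R σ = δ ∧ ((σ⁻¹ ⟨0, hR⟩ : Fin R) : ℕ) < M)).card : ℝ) / (Nperm R δ : ℝ) =
      (∑ m ∈ Finset.Icc 1 M,
        if m ≤ δ + 1 then (Nperm (R - 1) (δ + 1 - m) : ℝ) else 0) / (Nperm R δ : ℝ) ∧
    (Finset.univ.filter (fun σ : Equiv.Perm (Fin R) =>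
        invNum R σ = δ ∧ ((σ⁻¹ ⟨0, hR⟩ : Fin R) : ℕ) < M)).card =
      ∑ m ∈ Finset.Icc 1 M, if m ≤ δ + 1 then Nperm (R - 1) (δ + 1 - m) else 0 := by
  obtain ⟨n, rfl⟩ : ∃ n, R = n + 1 := ⟨R - 1, by omega⟩
  have hcount : #{σ : Perm (Fin (n + 1)) | invNum (n + 1) σ = δ ∧ (σ⁻¹ ⟨0, hR⟩ : ℕ) < M} =
      ∑ m ∈ Icc 1 M, if m ≤ δ + 1 then Nperm (n + 1 - 1) (δ + 1 - m) else 0 := by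
    refine (card_invNum_eq_inv_zero_lt δ hMR).trans ?_
    simp only [sum_Icc_one_eq_sum_range_succ, add_le_add_iff_right, Nat.add_sub_add_right,
      Nat.add_sub_cancel]
  exact ⟨by exact_mod_cast congrArg (fun c : ℕ => (c : ℝ) / Nperm (n + 1) δ) hcount, hcount⟩

/-- (Proposition 1.)  For `R ≥ 1`, `0 ≤ δ ≤ R(R−1)/2` and `1 ≤ M ≤ R`: if `σ` is drawn
uniformly at random from the permutations of `Fin R` with inversion number exactly `δ`,
the probability that `σ⁻¹ 0 < M` equals `∑_{m=1}^{M} N(R−1, δ−m+1) / N(R,δ)`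
(summands with negative index `δ−m+1 < 0` being zero); equivalently, the number of
permutations of `Fin R` with inversion number exactly `δ` and `σ⁻¹ 0 < M` equals
`∑_{m=1}^{M} N(R−1, δ−m+1)`. -/
theorem stmt2 (R δ M : ℕ) (hR : 1 ≤ R) (hδ : δ ≤ R * (R - 1) / 2)
    (hM1 : 1 ≤ M) (hMR : M ≤ R) :
    ((Finset.univ.filter (fun σ : Equiv.Perm (Fin R) =>
        invNum R σ = δ ∧ ((σ⁻¹ ⟨0, hR⟩ : Fin R) : ℕ) < M)).card : ℝ) / (Nperm R δ : ℝ) =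
      (∑ m ∈ Finset.Icc 1 M,
        if m ≤ δ + 1 then (Nperm (R - 1) (δ + 1 - m) : ℝ) else 0) / (Nperm R δ : ℝ) ∧
    (Finset.univ.filter (fun σ : Equiv.Perm (Fin R) =>
        invNum R σ = δ ∧ ((σ⁻¹ ⟨0, hR⟩ : Fin R) : ℕ) < M)).card =
      ∑ m ∈ Finset.Icc 1 M, if m ≤ δ + 1 then Nperm (R - 1) (δ + 1 - m) else 0 :=
  stmt2_general R δ M hR hMR
end

section
/- (Proposition 2, second part.) Let R ≥ 2 and δ ∈ ℕ with δ ≤ R−1. There is exactly one permutation σ of Fin R with inversion number exactly δ satisfying σ⁻¹(0) = δ; consequently, if σ is drawn uniformly at random from the set of permutations of Fin R with inversion number exactly δ, then the probability that σ⁻¹(0) < δ equals 1 − 1/C(R−1,δ). -/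
open Finset Equiv

/-- `Cperm r d` is the number of permutations of `Fin r` with inversion number at most `d`. -/
def Cperm (r d : ℕ) : ℕ :=
  (Finset.univ.filter (fun σ : Equiv.Perm (Fin r) => invNum r σ ≤ d)).card

/-- Insert a new minimum value `0` at position `k`. -/
def insertPerm (n : ℕ) (k : Fin (n+1)) (τ : Equiv.Perm (Fin n)) : Equiv.Perm (Fin (n+1)) :=
  (finSuccEquiv' k).trans ((τ.optionCongr).trans (finSuccEquiv n).symm)

lemma insertPerm_apply_self (n : ℕ) (k : Fin (n+1)) (τ : Equiv.Perm (Fin n)) :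
    insertPerm n k τ k = 0 := by
  simp [insertPerm]

lemma insertPerm_apply_succAbove (n : ℕ) (k : Fin (n+1)) (τ : Equiv.Perm (Fin n)) (i : Fin n) :
    insertPerm n k τ (k.succAbove i) = (τ i).succ := by
  simp [insertPerm, finSuccEquiv'_succAbove, finSuccEquiv_symm_some]

lemma insertPerm_inv_zero (n : ℕ) (k : Fin (n+1)) (τ : Equiv.Perm (Fin n)) :
    (insertPerm n k τ)⁻¹ 0 = k := by
  have := insertPerm_apply_self n k τ
  rw [← this]
  exact Equiv.symm_apply_apply _ _

lemma insertPerm_right_inj (n : ℕ) (k : Fin (n+1)) (τ τ' : Equiv.Perm (Fin n))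
    (h : insertPerm n k τ = insertPerm n k τ') : τ = τ' := by
  ext i
  have := congrArg (fun e : Equiv.Perm (Fin (n+1)) => e (k.succAbove i)) h
  simp only [insertPerm_apply_succAbove] at this
  exact congrArg Fin.val (Fin.succ_inj.mp this)

lemma invNum_insertPerm (n : ℕ) (k : Fin (n+1)) (τ : Equiv.Perm (Fin n)) :
    invNum (n+1) (insertPerm n k τ) = k + invNum n τ := by
  classical
  set σ := insertPerm n k τ with hσ
  have hσk : σ k = 0 := insertPerm_apply_self n k τ
  have hne : ∀ a : Fin (n+1), a ≠ k → σ a ≠ 0 := by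
    intro a ha h
    exact ha (σ.injective (h.trans hσk.symm))
  set S := Finset.univ.filter (fun p : Fin (n+1) × Fin (n+1) => p.1 < p.2 ∧ σ p.2 < σ p.1) with hS
  have hsplit := Finset.card_filter_add_card_filter_not
    (s := S) (p := fun p : Fin (n+1) × Fin (n+1) => p.2 = k)
  have h1 : S.filter (fun p => p.2 = k) = (Finset.Iio k).image (fun a => (a, k)) := by
    ext p
    simp only [hS, Finset.mem_filter, Finset.mem_image, Finset.mem_Iio, Finset.mem_univ, true_and]
    constructor
    · rintro ⟨⟨hlt, _⟩, hk⟩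
      exact ⟨p.1, by rw [← hk]; exact hlt, by rw [← hk]⟩
    · rintro ⟨a, ha, rfl⟩
      refine ⟨⟨ha, ?_⟩, rfl⟩
      rw [hσk]
      exact Fin.pos_iff_ne_zero.mpr (hne a (ne_of_lt ha))
  have hcard1 : (S.filter (fun p => p.2 = k)).card = k := by
    rw [h1, Finset.card_image_of_injective _ (fun a b hab => (Prod.mk.injEq _ _ _ _ ▸ hab).1),
      Fin.card_Iio]
  have h2 : S.filter (fun p => ¬ p.2 = k) =
      (Finset.univ.filter (fun q : Fin n × Fin n => q.1 < q.2 ∧ τ q.2 < τ q.1)).image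
        (Prod.map k.succAbove k.succAbove) := by
    ext p
    simp only [hS, Finset.mem_filter, Finset.mem_image, Finset.mem_univ, true_and]
    constructor
    · rintro ⟨⟨hlt, hinv⟩, hk⟩
      have hp1 : p.1 ≠ k := by
        intro h
        rw [h, hσk] at hinv
        exact absurd hinv (Fin.not_lt_zero _)
      obtain ⟨i, hi⟩ := Fin.exists_succAbove_eq hp1
      obtain ⟨j, hj⟩ := Fin.exists_succAbove_eq hk
      refine ⟨(i, j), ⟨?_, ?_⟩, ?_⟩
      · rw [← Fin.succAbove_lt_succAbove_iff (p := k), hi, hj]; exact hlt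
      · rw [← hi, ← hj, insertPerm_apply_succAbove, insertPerm_apply_succAbove] at hinv
        exact Fin.succ_lt_succ_iff.mp hinv
      · show (k.succAbove i, k.succAbove j) = p
        rw [hi, hj]
    · rintro ⟨⟨i, j⟩, ⟨hlt, hinv⟩, rfl⟩
      refine ⟨⟨?_, ?_⟩, ?_⟩
      · exact Fin.succAbove_lt_succAbove_iff.mpr hlt
      · simp only [Prod.map]
        rw [insertPerm_apply_succAbove, insertPerm_apply_succAbove]
        exact Fin.succ_lt_succ_iff.mpr hinv
      · exact Fin.succAbove_ne k j
  have hcard2 : (S.filter (fun p => ¬ p.2 = k)).card = invNum n τ := by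
    rw [h2, Finset.card_image_of_injective _
      (Function.Injective.prodMap (Fin.succAbove_right_injective) (Fin.succAbove_right_injective))]
    rfl
  have : invNum (n+1) σ = S.card := rfl
  omega

lemma exists_insertPerm (n : ℕ) (σ : Equiv.Perm (Fin (n+1))) :
    ∃ τ : Equiv.Perm (Fin n), insertPerm n (σ⁻¹ 0) τ = σ := by
  classical
  set k := σ⁻¹ 0 with hk
  have hσk : σ k = 0 := Equiv.apply_symm_apply σ 0
  set E : Option (Fin n) ≃ Option (Fin n) :=
    ((finSuccEquiv' k).symm.trans σ).trans (finSuccEquiv n) with hE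
  have hEnone : E none = none := by
    simp [hE, hσk]
  have hEsome : ∀ i : Fin n, some (E.removeNone i) = E (some i) := by
    intro i
    apply Equiv.removeNone_some
    rcases h : E (some i) with _ | x
    · exact absurd (E.injective (h.trans hEnone.symm)) (by simp)
    · exact ⟨x, rfl⟩
  refine ⟨E.removeNone, ?_⟩
  ext a
  rcases eq_or_ne a k with rfl | ha
  · rw [insertPerm_apply_self, hσk]
  · obtain ⟨i, rfl⟩ := Fin.exists_succAbove_eq ha
    rw [insertPerm_apply_succAbove]
    have := hEsome i
    rw [hE] at this
    simp only [Equiv.trans_apply, finSuccEquiv'_symm_some] at this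
    have h2 : (finSuccEquiv n).symm (some (E.removeNone i)) =
        (finSuccEquiv n).symm (finSuccEquiv n (σ (k.succAbove i))) := by
      rw [this]
    rw [finSuccEquiv_symm_some, Equiv.symm_apply_apply] at h2
    exact congrArg Fin.val h2

lemma invNum_eq_zero_iff (n : ℕ) (τ : Equiv.Perm (Fin n)) : invNum n τ = 0 ↔ τ = 1 := by
  constructor
  · intro h
    have hmono : StrictMono τ := by
      intro i j hij
      by_contra hc
      push_neg at hc
      have hlt : τ j < τ i := lt_of_le_of_ne hc fun h' => (ne_of_lt hij) (τ.injective h'.symm)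
      have hmem : (i, j) ∈ (Finset.univ.filter
          (fun p : Fin n × Fin n => p.1 < p.2 ∧ τ p.2 < τ p.1)) := by
        simp [hij, hlt]
      rw [invNum, Finset.card_eq_zero] at h
      rw [h] at hmem
      exact absurd hmem (Finset.notMem_empty _)
    let e : Fin n ≃o Fin n := ⟨τ, by intro a b; exact hmono.le_iff_le⟩
    have he : e = OrderIso.refl (Fin n) := Subsingleton.elim _ _
    ext i
    have hi : τ i = i := congrArg (fun f : Fin n ≃o Fin n => f i) he
    simp [hi]
  · rintro rfl
    rw [invNum, Finset.card_eq_zero, Finset.filter_eq_empty_iff]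
    rintro p - ⟨h1, h2⟩
    simp only [Equiv.Perm.one_apply] at h2
    exact absurd (h1.trans h2) (lt_irrefl _)

lemma key (n δ : ℕ) (hδ : δ ≤ n) (P : ℕ → Prop) [DecidablePred P] :
    (Finset.univ.filter (fun σ : Equiv.Perm (Fin (n+1)) =>
        invNum (n+1) σ = δ ∧ P ((σ⁻¹ 0 : Fin (n+1)) : ℕ))).card
    = (Finset.univ.filter (fun τ : Equiv.Perm (Fin n) =>
        invNum n τ ≤ δ ∧ P (δ - invNum n τ))).card := by
  classical
  symm
  apply Finset.card_bij (fun τ _ => insertPerm n ⟨δ - invNum n τ, by omega⟩ τ)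
  · intro τ hτ
    simp only [Finset.mem_filter, Finset.mem_univ, true_and] at hτ ⊢
    obtain ⟨h1, h2⟩ := hτ
    rw [invNum_insertPerm, insertPerm_inv_zero]
    exact ⟨by simp; omega, by simpa using h2⟩
  · intro τ1 h1 τ2 h2 heq
    have hk : (⟨δ - invNum n τ1, by omega⟩ : Fin (n+1)) = ⟨δ - invNum n τ2, by omega⟩ := by
      have a1 := insertPerm_inv_zero n ⟨δ - invNum n τ1, by omega⟩ τ1
      have a2 := insertPerm_inv_zero n ⟨δ - invNum n τ2, by omega⟩ τ2
      rw [← a1, ← a2, heq]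
    rw [hk] at heq
    exact insertPerm_right_inj _ _ _ _ heq
  · intro σ hσ
    simp only [Finset.mem_filter, Finset.mem_univ, true_and] at hσ
    obtain ⟨h1, h2⟩ := hσ
    obtain ⟨τ, hτ⟩ := exists_insertPerm n σ
    have hinv : invNum (n+1) σ = (σ⁻¹ 0 : Fin (n+1)) + invNum n τ := by
      rw [← hτ, invNum_insertPerm, insertPerm_inv_zero]
    have hle : invNum n τ ≤ δ := by omega
    have hkeq : (⟨δ - invNum n τ, by omega⟩ : Fin (n+1)) = σ⁻¹ 0 := by
      apply Fin.ext
      simp only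
      omega
    refine ⟨τ, ?_, ?_⟩
    · simp only [Finset.mem_filter, Finset.mem_univ, true_and]
      refine ⟨hle, ?_⟩
      have : δ - invNum n τ = ((σ⁻¹ 0 : Fin (n+1)) : ℕ) := by omega
      rw [this]; exact h2
    · rw [hkeq, hτ]

/-- (Proposition 2, second part.)  For `R ≥ 2` and `δ ≤ R − 1`: there is exactly one
permutation `σ` of `Fin R` with inversion number exactly `δ` and `σ⁻¹ 0 = δ`;
consequently, if `σ` is drawn uniformly at random from the permutations with inversion
number exactly `δ`, the probability that `σ⁻¹ 0 < δ` equals `1 − 1/C(R−1,δ)`. -/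
theorem stmt6 (R δ : ℕ) (hR : 2 ≤ R) (hδ : δ ≤ R - 1) :
    (Finset.univ.filter (fun σ : Equiv.Perm (Fin R) =>
        invNum R σ = δ ∧ ((σ⁻¹ ⟨0, Nat.lt_of_lt_of_le two_pos hR⟩ : Fin R) : ℕ) = δ)).card = 1 ∧
    ((Finset.univ.filter (fun σ : Equiv.Perm (Fin R) =>
        invNum R σ = δ ∧ ((σ⁻¹ ⟨0, Nat.lt_of_lt_of_le two_pos hR⟩ : Fin R) : ℕ) < δ)).card : ℝ) /
      (Nperm R δ : ℝ) = 1 - 1 / (Cperm (R - 1) δ : ℝ) := by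
  classical
  obtain ⟨n, rfl⟩ : ∃ n, R = n + 1 := ⟨R - 1, by omega⟩
  have hn : δ ≤ n := by omega
  have hzero : (⟨0, Nat.lt_of_lt_of_le two_pos hR⟩ : Fin (n+1)) = 0 := rfl
  have hRn : n + 1 - 1 = n := rfl
  -- the singleton filter
  have hone : (Finset.univ.filter (fun τ : Equiv.Perm (Fin n) =>
      invNum n τ ≤ δ ∧ δ - invNum n τ = δ)).card = 1 := by
    have : (Finset.univ.filter (fun τ : Equiv.Perm (Fin n) =>
        invNum n τ ≤ δ ∧ δ - invNum n τ = δ)) = {1} := by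
      ext τ
      simp only [Finset.mem_filter, Finset.mem_univ, true_and, Finset.mem_singleton]
      constructor
      · rintro ⟨h1, h2⟩
        exact (invNum_eq_zero_iff n τ).mp (by omega)
      · rintro rfl
        have h0 : invNum n (1 : Equiv.Perm (Fin n)) = 0 := (invNum_eq_zero_iff n 1).mpr rfl
        omega
    rw [this, Finset.card_singleton]
  have hpart1 : (Finset.univ.filter (fun σ : Equiv.Perm (Fin (n+1)) =>
      invNum (n+1) σ = δ ∧ ((σ⁻¹ ⟨0, Nat.lt_of_lt_of_le two_pos hR⟩ : Fin (n+1)) : ℕ) = δ)).card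
      = 1 := by
    rw [hzero, key n δ hn (fun x => x = δ), hone]
  have hN : Nperm (n+1) δ = Cperm n δ := by
    have := key n δ hn (fun _ => True)
    simp only [and_true] at this
    rw [Nperm, this, Cperm]
  have hCpos : 1 ≤ Cperm n δ := by
    rw [Cperm]
    apply Finset.card_pos.mpr
    exact ⟨1, by simp [(invNum_eq_zero_iff n 1).mpr rfl]⟩
  have hnum : (Finset.univ.filter (fun σ : Equiv.Perm (Fin (n+1)) =>
      invNum (n+1) σ = δ ∧ ((σ⁻¹ ⟨0, Nat.lt_of_lt_of_le two_pos hR⟩ : Fin (n+1)) : ℕ) < δ)).card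
      = Cperm n δ - 1 := by
    rw [hzero, key n δ hn (fun x => x < δ)]
    have hsplit := Finset.card_filter_add_card_filter_not
      (s := Finset.univ.filter (fun τ : Equiv.Perm (Fin n) => invNum n τ ≤ δ))
      (p := fun τ => δ - invNum n τ = δ)
    rw [Finset.filter_filter, Finset.filter_filter] at hsplit
    have heq1 : (Finset.univ.filter fun τ : Equiv.Perm (Fin n) =>
        invNum n τ ≤ δ ∧ δ - invNum n τ = δ).card = 1 := hone
    have heq2 : (Finset.univ.filter fun τ : Equiv.Perm (Fin n) =>
        invNum n τ ≤ δ ∧ ¬ (δ - invNum n τ = δ)) =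
        (Finset.univ.filter fun τ : Equiv.Perm (Fin n) =>
        invNum n τ ≤ δ ∧ δ - invNum n τ < δ) := by
      apply Finset.filter_congr
      intro τ _
      constructor
      · rintro ⟨h1, h2⟩; exact ⟨h1, by omega⟩
      · rintro ⟨h1, h2⟩; exact ⟨h1, by omega⟩
    rw [heq2, heq1] at hsplit
    rw [← Cperm] at hsplit
    omega
  refine ⟨hpart1, ?_⟩
  rw [hnum, hN]
  have hC0 : (Cperm n δ : ℝ) ≠ 0 := Nat.cast_ne_zero.mpr (by omega)
  rw [Nat.cast_sub hCpos]
  push_cast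
  field_simp
end

section
/- With the reliability growth model below, the prior expectation of the residual system reliability after performing the set K of tasks satisfies E[ ∏_{i=1}^{I} r_i^{S_i} ] = ∏_{i=1}^{I} ( 1 − (1 − r_i) λ_i ∏_{j ∈ K} (1 − p_{i,j}) ), where S_i is the indicator that Z_i = 1 and B_{i,j} = 0 for all j ∈ K (i.e., concern i is a fault that no performed task detected). -/
/-!
The event `S_i = 1` is the intersection of `{Z_i = 1}` with the events `{B_{i,j} = 0}`,
`j ∈ K`. These blocks of the independent family are disjoint for distinct `i`, so the
events `{S_i = 1}` are independent, each of probability `λ_i ∏_{j ∈ K} (1 - p_{i,j})`.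
Writing `r_i^{S_i} = 1 - (1 - r_i) S_i`, the expectation of the product is the product of
the expectations `1 - (1 - r_i) P(S_i = 1)`.
-/

open MeasureTheory ProbabilityTheory Function

namespace ProbabilityTheory

variable {Ω ι κ : Type*} {mΩ : MeasurableSpace Ω} {μ : Measure Ω}

lemma iIndep.measureReal_biInter {m : κ → MeasurableSpace Ω} (hμ : iIndep m μ)
    {S : Finset κ} {s : κ → Set Ω} (hs : ∀ k ∈ S, MeasurableSet[m k] (s k)) :
    μ.real (⋂ k ∈ S, s k) = ∏ k ∈ S, μ.real (s k) := by
  simp only [measureReal_def, hμ.meas_biInter hs, ENNReal.toReal_prod]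

lemma iIndep.iIndepSet_biInter {m : κ → MeasurableSpace Ω} (hμ : iIndep m μ)
    (hm : ∀ k, m k ≤ mΩ) {S : ι → Finset κ} (hS : Pairwise (Disjoint on S)) {s : κ → Set Ω}
    (hs : ∀ k, MeasurableSet[m k] (s k)) :
    iIndepSet (fun i ↦ ⋂ k ∈ S i, s k) μ := by
  classical
  refine (iIndepSet_iff_meas_biInter fun i ↦
    (S i).measurableSet_biInter fun k _ ↦ hm k _ (hs k)).2 fun T ↦ ?_
  rw [← Finset.set_biInter_biUnion, hμ.meas_biInter fun k _ ↦ hs k,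
    Finset.prod_biUnion fun i _ j _ hij ↦ hS hij]
  exact Finset.prod_congr rfl fun i _ ↦ (hμ.meas_biInter fun k _ ↦ hs k).symm

lemma probReal_setOf_eq_false [IsProbabilityMeasure μ] {f : Ω → Bool} (hf : Measurable f) :
    μ.real {ω | f ω = false} = 1 - μ.real {ω | f ω = true} := by
  have hcompl : {ω | f ω = false} = {ω | f ω = true}ᶜ := by ext; simp
  rw [hcompl, probReal_compl_eq_one_sub (s := {ω | f ω = true}) (hf (measurableSet_singleton _))]

lemma integral_one_sub_mul_indicator [IsProbabilityMeasure μ] {A : Set Ω}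
    (hA : MeasurableSet A) (c : ℝ) :
    ∫ ω, (1 - c * A.indicator (fun _ ↦ 1) ω) ∂μ = 1 - c * μ.real A := by
  rw [integral_sub (integrable_const 1) (((integrable_const 1).indicator hA).const_mul c),
    integral_const_mul, integral_indicator_const (1 : ℝ) hA]
  simp

lemma iIndepSet.integral_prod_ite [Fintype ι] {A : ι → Set Ω} [∀ i, DecidablePred (· ∈ A i)]
    (hA : iIndepSet A μ) (hAm : ∀ i, MeasurableSet (A i)) (r : ι → ℝ) :
    ∫ ω, ∏ i, (if ω ∈ A i then r i else 1) ∂μ = ∏ i, (1 - (1 - r i) * μ.real (A i)) := by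
  have := hA.isProbabilityMeasure
  have hite : ∀ i ω,
      (if ω ∈ A i then r i else 1) = 1 - (1 - r i) * (A i).indicator (fun _ ↦ 1) ω := by
    intro i ω
    by_cases h : ω ∈ A i <;> simp [h]
  simp_rw [hite, ← integral_one_sub_mul_indicator (μ := μ) (hAm _)]
  exact hA.iIndepFun_indicator.integral_fun_prod_comp (f := fun i x ↦ 1 - (1 - r i) * x)
    (fun i ↦ (measurable_one.indicator (hAm i)).aemeasurable) fun i ↦ by fun_prop

end ProbabilityTheory

section ReliabilityGrowth

variable {Ω : Type*} {mΩ : MeasurableSpace Ω} {P : Measure Ω} {I J : ℕ} {Z : Fin I → Ω → Bool}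
  {B : Fin I → Fin J → Ω → Bool}

/-- The indices of `Z i` and of the `B i j`, `j ∈ K`, in the family `Sum.elim Z B`. -/
def detectionBlock (K : Finset (Fin J)) (i : Fin I) : Finset (Fin I ⊕ Fin I × Fin J) :=
  insert (.inl i) (K.image fun j ↦ .inr (i, j))

def faultOrMissEvent (Z : Fin I → Ω → Bool) (B : Fin I → Fin J → Ω → Bool) :
    Fin I ⊕ Fin I × Fin J → Set Ω :=
  Sum.elim (fun i ↦ {ω | Z i ω = true}) fun ij ↦ {ω | B ij.1 ij.2 ω = false}

def undetectedFault (Z : Fin I → Ω → Bool) (B : Fin I → Fin J → Ω → Bool)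
    (K : Finset (Fin J)) (i : Fin I) : Set Ω :=
  {ω | Z i ω = true ∧ ∀ j ∈ K, B i j ω = false}

lemma pairwise_disjoint_detectionBlock (K : Finset (Fin J)) :
    Pairwise (Disjoint on detectionBlock (I := I) K) := by
  intro i i' hii'
  simp [detectionBlock, Finset.disjoint_left, hii', Ne.symm hii']

lemma undetectedFault_eq_biInter (K : Finset (Fin J)) (i : Fin I) :
    undetectedFault Z B K i = ⋂ k ∈ detectionBlock K i, faultOrMissEvent Z B k := by
  ext ω
  simp [undetectedFault, detectionBlock, faultOrMissEvent]

lemma measurableSet_comap_faultOrMissEvent (k : Fin I ⊕ Fin I × Fin J) :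
    MeasurableSet[MeasurableSpace.comap (Sum.elim Z (fun ij ↦ B ij.1 ij.2) k) inferInstance]
      (faultOrMissEvent Z B k) := by
  rcases k with i | ij
  · exact ⟨{true}, .of_discrete, rfl⟩
  · exact ⟨{false}, .of_discrete, rfl⟩

lemma comap_sumElim_le (hZ : ∀ i, Measurable (Z i)) (hB : ∀ i j, Measurable (B i j))
    (k : Fin I ⊕ Fin I × Fin J) :
    MeasurableSpace.comap (Sum.elim Z (fun ij ↦ B ij.1 ij.2) k) inferInstance ≤ mΩ := by
  rcases k with i | ij
  exacts [(hZ i).comap_le, (hB ij.1 ij.2).comap_le]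

lemma iIndepSet_undetectedFault (hZ : ∀ i, Measurable (Z i)) (hB : ∀ i j, Measurable (B i j))
    (hindep : iIndepFun (Sum.elim Z (fun ij : Fin I × Fin J ↦ B ij.1 ij.2)) P)
    (K : Finset (Fin J)) :
    iIndepSet (undetectedFault Z B K) P := by
  simp_rw [funext (undetectedFault_eq_biInter K)]
  exact hindep.iIndep.iIndepSet_biInter (comap_sumElim_le hZ hB)
    (pairwise_disjoint_detectionBlock K) measurableSet_comap_faultOrMissEvent

lemma measurableSet_undetectedFault (hZ : ∀ i, Measurable (Z i))
    (hB : ∀ i j, Measurable (B i j)) (K : Finset (Fin J)) (i : Fin I) :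
    MeasurableSet (undetectedFault Z B K i) := by
  rw [undetectedFault_eq_biInter]
  exact Finset.measurableSet_biInter _ fun k _ ↦
    comap_sumElim_le hZ hB k _ (measurableSet_comap_faultOrMissEvent k)

lemma measureReal_undetectedFault [IsProbabilityMeasure P] (hB : ∀ i j, Measurable (B i j))
    (hindep : iIndepFun (Sum.elim Z (fun ij : Fin I × Fin J ↦ B ij.1 ij.2)) P)
    {lam : Fin I → ℝ} {p : Fin I → Fin J → ℝ} (hlam : ∀ i, 0 ≤ lam i) (hp : ∀ i j, 0 ≤ p i j)
    (hZP : ∀ i, P {ω | Z i ω = true} = ENNReal.ofReal (lam i))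
    (hBP : ∀ i j, P {ω | B i j ω = true} = ENNReal.ofReal (p i j))
    (K : Finset (Fin J)) (i : Fin I) :
    P.real (undetectedFault Z B K i) = lam i * ∏ j ∈ K, (1 - p i j) := by
  rw [undetectedFault_eq_biInter,
    hindep.iIndep.measureReal_biInter fun k _ ↦ measurableSet_comap_faultOrMissEvent k,
    detectionBlock, Finset.prod_insert (by simp), Finset.prod_image (by simp)]
  simp only [faultOrMissEvent, Sum.elim_inl, Sum.elim_inr, probReal_setOf_eq_false (hB _ _),
    measureReal_def, hZP, hBP, ENNReal.toReal_ofReal (hlam i), ENNReal.toReal_ofReal (hp i _)]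

end ReliabilityGrowth

theorem stmt8_general {Ω : Type*} [MeasurableSpace Ω] (P : Measure Ω) [IsProbabilityMeasure P]
    (I J : ℕ) (Z : Fin I → Ω → Bool) (B : Fin I → Fin J → Ω → Bool)
    (hZmeas : ∀ i, Measurable (Z i)) (hBmeas : ∀ i j, Measurable (B i j))
    (hindep : iIndepFun
      (Sum.elim Z (fun ij : Fin I × Fin J => B ij.1 ij.2)) P)
    (lam : Fin I → ℝ) (p : Fin I → Fin J → ℝ) (r : Fin I → ℝ)
    (hlam : ∀ i, lam i ∈ Set.Icc (0 : ℝ) 1) (hp : ∀ i j, p i j ∈ Set.Icc (0 : ℝ) 1)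
    (hZ : ∀ i, P {ω | Z i ω = true} = ENNReal.ofReal (lam i))
    (hB : ∀ i j, P {ω | B i j ω = true} = ENNReal.ofReal (p i j))
    (K : Finset (Fin J)) :
    (∫ ω, (∏ i, if Z i ω = true ∧ ∀ j ∈ K, B i j ω = false then r i else 1) ∂P) =
      ∏ i, (1 - (1 - r i) * lam i * ∏ j ∈ K, (1 - p i j)) := by
  classical
  have hprod := (iIndepSet_undetectedFault hZmeas hBmeas hindep K).integral_prod_ite
    (measurableSet_undetectedFault hZmeas hBmeas K) r
  simp only [measureReal_undetectedFault hBmeas hindep (fun i ↦ (hlam i).1)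
    (fun i j ↦ (hp i j).1) hZ hB, ← mul_assoc] at hprod
  convert hprod using 5
  exact Iff.rfl

/-- With `I` concerns and `J` tasks, mutually independent `{0,1}`-valued (here
`Bool`-valued) random variables `Z i` (concern `i` is a fault, `P(Z i = 1) = λ i`) and
`B i j` (task `j` would detect concern `i` given that it is a fault,
`P(B i j = 1) = p i j`), and a set `K` of performed tasks, the prior expectation of the
residual system reliability `∏_{i} r_i^{S_i}` — where `S_i` indicates that `Z_i = 1`
and `B_{i,j} = 0` for all `j ∈ K` — equals
`∏_{i} (1 − (1 − r_i) λ_i ∏_{j ∈ K} (1 − p_{i,j}))`. -/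
theorem stmt8 {Ω : Type*} [MeasurableSpace Ω] (P : Measure Ω) [IsProbabilityMeasure P]
    (I J : ℕ) (Z : Fin I → Ω → Bool) (B : Fin I → Fin J → Ω → Bool)
    (hZmeas : ∀ i, Measurable (Z i)) (hBmeas : ∀ i j, Measurable (B i j))
    (hindep : iIndepFun
      (Sum.elim Z (fun ij : Fin I × Fin J => B ij.1 ij.2)) P)
    (lam : Fin I → ℝ) (p : Fin I → Fin J → ℝ) (r : Fin I → ℝ)
    (hlam : ∀ i, lam i ∈ Set.Icc (0 : ℝ) 1) (hp : ∀ i j, p i j ∈ Set.Icc (0 : ℝ) 1)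
    (hr : ∀ i, r i ∈ Set.Icc (0 : ℝ) 1)
    (hZ : ∀ i, P {ω | Z i ω = true} = ENNReal.ofReal (lam i))
    (hB : ∀ i j, P {ω | B i j ω = true} = ENNReal.ofReal (p i j))
    (K : Finset (Fin J)) :
    (∫ ω, (∏ i, if Z i ω = true ∧ ∀ j ∈ K, B i j ω = false then r i else 1) ∂P) =
      ∏ i, (1 - (1 - r i) * lam i * ∏ j ∈ K, (1 - p i j)) :=
  stmt8_general P I J Z B hZmeas hBmeas hindep lam p r hlam hp hZ hB K
end
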